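/- For every well-formed execution, under the SC instantiation — ppo = po, fences = ∅, hb = ppo ∪ fences ∪ rfe, prop = ppo ∪ fences ∪ rf ∪ fr — the PROPAGATION axiom acyclic(co ∪ prop), which here equals acyclic(co ∪ po ∪ rf ∪ fr), is equivalent to acyclic(po ∪ com), and it implies each of the other three axioms: SC-PER-LOCATION (acyclic(po-loc ∪ com)), NO-THIN-AIR (acyclic(hb)), and OBSERVATION (irreflexive(fre ; prop ; hb*)). -/

import Mathlib

universe u v

/-- Relational composition `r1 ; r2`. -/
def rcomp {E : Type u} (r1 r2 : E → E → Prop) : E → E → Prop :=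
  fun x z => ∃ y, r1 x y ∧ r2 y z

/-- `irreflexive r` : no event is related to itself. -/
def irreflexiveRel {E : Type u} (r : E → E → Prop) : Prop := ¬ ∃ x, r x x

/-- `acyclic r` : the transitive closure of `r` is irreflexive. -/
def acyclicRel {E : Type u} (r : E → E → Prop) : Prop :=
  irreflexiveRel (Relation.TransGen r)

/-- A well-formed execution `(E, po, rf, co)` together with its event data. -/
structure WellFormedExec (E : Type u) (Loc : Type v) where
  /-- thread of an event -/
  proc : E → ℕ
  /-- memory location of an event -/
  addr : E → Loc
  /-- set of write events -/
  W : Set E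
  /-- set of read events -/
  R : Set E
  po : E → E → Prop
  rf : E → E → Prop
  co : E → E → Prop
  WR_disjoint : Disjoint W R
  po_trans : ∀ x y z, po x y → po y z → po x z
  po_irrefl : ∀ x, ¬ po x x
  po_wf : ∀ x y, po x y → x ≠ y ∧ proc x = proc y
  po_total : ∀ x y, x ≠ y → proc x = proc y → po x y ∨ po y x
  rf_wf : ∀ w r, rf w r → w ∈ W ∧ r ∈ R ∧ addr w = addr r
  rf_exists_unique : ∀ r ∈ R, ∃! w, rf w r
  co_wf : ∀ w1 w2, co w1 w2 → w1 ∈ W ∧ w2 ∈ W ∧ w1 ≠ w2 ∧ addr w1 = addr w2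
  co_trans : ∀ x y z, co x y → co y z → co x z
  co_irrefl : ∀ x, ¬ co x x
  co_total : ∀ w1 w2, w1 ∈ W → w2 ∈ W → w1 ≠ w2 → addr w1 = addr w2 → co w1 w2 ∨ co w2 w1

namespace WellFormedExec

variable {E : Type u} {Loc : Type v} (X : WellFormedExec E Loc)

/-- program order restricted to the same location -/
def poloc : E → E → Prop := fun x y => X.po x y ∧ X.addr x = X.addr y

/-- from-read -/
def fr : E → E → Prop := fun r w1 => ∃ w0, X.rf w0 r ∧ X.co w0 w1

/-- communications -/
def com : E → E → Prop := fun x y => X.co x y ∨ X.rf x y ∨ X.fr x y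

/-- external read-from -/
def rfe : E → E → Prop := fun w r => X.rf w r ∧ X.proc w ≠ X.proc r

/-- external from-read -/
def fre : E → E → Prop := fun r w => X.fr r w ∧ X.proc r ≠ X.proc w

end WellFormedExec

section SC

variable {E : Type u} {Loc : Type v}

/-- SC instantiation: preserved program order is all of `po`. -/
def scPpo (X : WellFormedExec E Loc) : E → E → Prop := X.po

/-- SC instantiation: no fences. -/
def scFences (_X : WellFormedExec E Loc) : E → E → Prop := fun _ _ => False

/-- SC happens-before: `ppo ∪ fences ∪ rfe`. -/
def scHb (X : WellFormedExec E Loc) : E → E → Prop :=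
  fun x y => scPpo X x y ∨ scFences X x y ∨ X.rfe x y

/-- SC propagation order: `ppo ∪ fences ∪ rf ∪ fr`. -/
def scProp (X : WellFormedExec E Loc) : E → E → Prop :=
  fun x y => scPpo X x y ∨ scFences X x y ∨ X.rf x y ∨ X.fr x y

theorem acyclicRel.mono {α : Type*} {r s : α → α → Prop} (hs : acyclicRel s)
    (hrs : ∀ x y, r x y → s x y) : acyclicRel r :=
  fun ⟨x, hx⟩ => hs ⟨x, Relation.TransGen.mono hrs _ _ hx⟩

theorem acyclicRel_congr {α : Type*} {r s : α → α → Prop} (hrs : ∀ x y, r x y ↔ s x y) :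
    acyclicRel r ↔ acyclicRel s :=
  ⟨fun hr => hr.mono fun x y => (hrs x y).mpr, fun hs => hs.mono fun x y => (hrs x y).mp⟩

theorem acyclicRel.irreflexiveRel_rcomp_rcomp_reflTransGen {α : Type*}
    {r₁ r₂ r₃ s : α → α → Prop} (hs : acyclicRel s) (h₁ : ∀ x y, r₁ x y → s x y)
    (h₂ : ∀ x y, r₂ x y → s x y) (h₃ : ∀ x y, r₃ x y → s x y) :
    irreflexiveRel (rcomp r₁ (rcomp r₂ (Relation.ReflTransGen r₃))) := by
  rintro ⟨x, y, hxy, z, hyz, hzx⟩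
  have hxz : Relation.TransGen s x z := .tail (.single (h₁ x y hxy)) (h₂ y z hyz)
  exact hs ⟨x, hxz.trans_left (Relation.ReflTransGen.mono h₃ _ _ hzx)⟩

theorem co_or_scProp_iff_po_or_com (X : WellFormedExec E Loc) (x y : E) :
    X.co x y ∨ scProp X x y ↔ X.po x y ∨ X.com x y := by
  simp only [scProp, scPpo, scFences, WellFormedExec.com, false_or]
  tauto

theorem scHb_le_scProp (X : WellFormedExec E Loc) (x y : E) (h : scHb X x y) :
    scProp X x y := by
  rcases h with hpo | hfence | hrfe
  exacts [Or.inl hpo, hfence.elim, Or.inr (Or.inr (Or.inl hrfe.1))]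

theorem fre_le_scProp (X : WellFormedExec E Loc) (x y : E) (h : X.fre x y) :
    scProp X x y :=
  Or.inr (Or.inr (Or.inr h.1))

theorem poloc_or_com_le_po_or_com (X : WellFormedExec E Loc) (x y : E)
    (h : X.poloc x y ∨ X.com x y) : X.po x y ∨ X.com x y :=
  h.imp_left And.left

/-- Under the SC instantiation, PROPAGATION is equivalent to `acyclic (po ∪ com)`
    and implies the other three axioms. -/
theorem sc_propagation_equiv_and_implies (X : WellFormedExec E Loc) :
    ((acyclicRel (fun x y => X.co x y ∨ scProp X x y)
        ↔ acyclicRel (fun x y => X.po x y ∨ X.com x y)) ∧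
     (acyclicRel (fun x y => X.co x y ∨ scProp X x y) →
        acyclicRel (fun x y => X.poloc x y ∨ X.com x y)) ∧
     (acyclicRel (fun x y => X.co x y ∨ scProp X x y) →
        acyclicRel (scHb X)) ∧
     (acyclicRel (fun x y => X.co x y ∨ scProp X x y) →
        irreflexiveRel (rcomp X.fre (rcomp (scProp X) (Relation.ReflTransGen (scHb X)))))) := by
  have hpropagation := acyclicRel_congr (co_or_scProp_iff_po_or_com X)
  refine ⟨hpropagation, fun h => ?_, fun h => ?_, fun h => ?_⟩
  · exact (hpropagation.mp h).mono (poloc_or_com_le_po_or_com X)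
  · exact h.mono fun x y hxy => Or.inr (scHb_le_scProp X x y hxy)
  · exact h.irreflexiveRel_rcomp_rcomp_reflTransGen
      (fun x y hxy => Or.inr (fre_le_scProp X x y hxy)) (fun _ _ => Or.inr)
      (fun x y hxy => Or.inr (scHb_le_scProp X x y hxy))

end SC
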